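/- If X is a finite-dimensional Noetherian topological space in which every maximal chain of irreducible closed subsets has the same length, then X is catenary: for all irreducible closed subsets Y ⊆ Z of X, all saturated chains of irreducible closed subsets starting at Y and ending at Z have the same length. -/

import Mathlib

/-!
Finite dimension makes the poset of irreducible closed subsets well-founded in both directions,
so any `x ≤ y` are joined by a saturated chain, and every element lies above a minimal and below
a maximal one. Prolonging two saturated chains from `Y` to `Z` by the same saturated chains
below `Y` and above `Z` gives two maximal chains, whose lengths agree by biequidimensionality;
subtracting the common prolongations gives the claim.
-/

open Order TopologicalSpace

/-- A maximal chain of irreducible closed subsets. -/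
def IsMaximalChain {α : Type*} [PartialOrder α] (p : LTSeries α) : Prop :=
  IsMin p.head ∧ IsMax p.last ∧ ∀ i : Fin p.length, p.toFun i.castSucc ⋖ p.toFun i.succ

namespace Order

variable {α : Type*} [Preorder α]

lemma wellFoundedLT_of_krullDim_lt_top (h : krullDim α < ⊤) : WellFoundedLT α := by
  cases isEmpty_or_nonempty α
  · exact inferInstance
  have : FiniteDimensionalOrder α :=
    (finiteDimensionalOrder_or_infiniteDimensionalOrder α).resolve_right
      fun _ ↦ h.ne (krullDim_eq_top_iff.mpr ‹_›)
  exact ⟨SetRel.IsWellFounded.of_finiteDimensional {(a, b) : α × α | a < b}⟩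

lemma wellFoundedGT_of_krullDim_lt_top (h : krullDim α < ⊤) : WellFoundedGT α :=
  wellFoundedLT_of_krullDim_lt_top (α := αᵒᵈ) (by rwa [krullDim_orderDual])

end Order

def IsBiequidimensional (α : Type*) [PartialOrder α] : Prop :=
  ∀ p q : LTSeries α, IsMaximalChain p → IsMaximalChain q → p.length = q.length

section Biequidimensional

variable {α : Type*} [PartialOrder α]

lemma exists_covBy_relSeries_of_le [WellFoundedLT α] [WellFoundedGT α] {x y : α} (h : x ≤ y) :
    ∃ c : RelSeries {(a, b) : α × α | a ⋖ b}, c.head = x ∧ c.last = y := by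
  obtain ⟨a, rfl, n, rfl, ha⟩ := exists_covBy_seq_of_wellFoundedLT_wellFoundedGT_of_le h
  exact ⟨⟨n, fun i ↦ a i, fun i ↦ ha i i.is_lt⟩, rfl, rfl⟩

lemma isMaximalChain_ofLE_covBy (c : RelSeries {(a, b) : α × α | a ⋖ b})
    (hmin : IsMin c.head) (hmax : IsMax c.last) :
    IsMaximalChain (c.ofLE fun _ h ↦ CovBy.lt h) :=
  ⟨hmin, hmax, c.step⟩

theorem IsBiequidimensional.length_eq_of_covBy [WellFoundedLT α] [WellFoundedGT α]
    (hα : IsBiequidimensional α) {p q : RelSeries {(a, b) : α × α | a ⋖ b}}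
    (hhead : p.head = q.head) (hlast : p.last = q.last) : p.length = q.length := by
  obtain ⟨m, hm, hmin⟩ := exists_minimal_le_of_wellFoundedLT (fun _ ↦ True) p.head trivial
  obtain ⟨M, hM, hmax⟩ := exists_maximal_ge_of_wellFoundedGT (fun _ ↦ True) p.last trivial
  obtain ⟨below, hbelow_head, hbelow_last⟩ := exists_covBy_relSeries_of_le hm
  obtain ⟨above, habove_head, habove_last⟩ := exists_covBy_relSeries_of_le hM
  have extend : ∀ r : RelSeries {(a, b) : α × α | a ⋖ b}, r.head = p.head → r.last = p.last →
      ∃ c : LTSeries α, IsMaximalChain c ∧ c.length = below.length + r.length + above.length := by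
    intro r hr_head hr_last
    let c := (below.smash r (hbelow_last.trans hr_head.symm)).smash above
      (by rw [RelSeries.last_smash, hr_last, habove_head])
    refine ⟨c.ofLE fun _ h ↦ CovBy.lt h, isMaximalChain_ofLE_covBy c ?_ ?_, rfl⟩
    · simpa [c, hbelow_head] using hmin
    · simpa [c, habove_last] using hmax
  obtain ⟨cp, hcp, hcp_length⟩ := extend p rfl rfl
  obtain ⟨cq, hcq, hcq_length⟩ := extend q hhead.symm hlast.symm
  have := hα cp cq hcp hcq
  omega

end Biequidimensional

theorem stmt_2 (X : Type*) [TopologicalSpace X]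
    (hfd : topologicalKrullDim X < ⊤)
    (hbieq : ∀ p q : LTSeries (IrreducibleCloseds X),
      IsMaximalChain p → IsMaximalChain q → p.length = q.length) :
    ∀ p q : RelSeries {(a, b) : IrreducibleCloseds X × IrreducibleCloseds X | a ⋖ b},
      p.head = q.head → p.last = q.last → p.length = q.length := by
  have := wellFoundedLT_of_krullDim_lt_top hfd
  have := wellFoundedGT_of_krullDim_lt_top hfd
  exact fun p q ↦ IsBiequidimensional.length_eq_of_covBy hbieq
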